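/- arXiv:1403.7677 — 3 statements merged into one kernel-verified Lean document; each statement's English description precedes it below -/
import Mathlib

section
/- Assume the standing setup, and assume additionally that A has a weak near unanimity term. Let θ be a congruence of C and let p, q, r, s be four distinct indices in ℤ ∖ [-n,0] with α_p θ α_r and α_q θ α_s. Then the elements α_{pq}, α_{rq}, α_{ps}, α_{rs} all belong to C and are pairwise θ-related. -/
/-- Terms of arity `k` over a signature with operation symbols `ι` of arities `arity`. -/
inductive AlgTerm (ι : Type) (arity : ι → ℕ) (k : ℕ) : Type
  | var : Fin k → AlgTerm ι arity k
  | app : (i : ι) → (Fin (arity i) → AlgTerm ι arity k) → AlgTerm ι arity k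

variable {ι : Type} {arity : ι → ℕ} {A : Type}

/-- Evaluation of a term in an algebra `⟨A, ops⟩` at a tuple `v` of arguments. -/
def AlgTerm.eval (ops : ∀ i, (Fin (arity i) → A) → A) {k : ℕ} :
    AlgTerm ι arity k → (Fin k → A) → A
  | .var j, v => v j
  | .app i ts, v => ops i fun m => (ts m).eval ops v

/-- `t` is a cube term for the algebra `⟨A, ops⟩`. -/
def IsCubeTerm (ops : ∀ i, (Fin (arity i) → A) → A) {k : ℕ} (t : AlgTerm ι arity k) : Prop :=
  ∀ i : Fin k, ∃ u : Fin k → Bool, u i = true ∧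
    ∀ x y : A, t.eval ops (fun j => if u j then y else x) = x

/-- The algebra `⟨A, ops⟩` has a cube term. -/
def HasCubeTerm (ops : ∀ i, (Fin (arity i) → A) → A) : Prop :=
  ∃ k : ℕ, 0 < k ∧ ∃ t : AlgTerm ι arity k, IsCubeTerm ops t

/-- The relation `a ≺ b`. -/
def Prec (ops : ∀ i, (Fin (arity i) → A) → A) (a b : A) : Prop :=
  ∃ k m : ℕ, 0 < k ∧ 0 < m ∧ ∃ t : AlgTerm ι arity k, ∃ u : Fin k → Fin m → A,
    (∀ i j, u i j = a ∨ u i j = b) ∧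
    (∀ i, ∃ j, u i j ≠ a) ∧
    (∀ j, t.eval ops (fun i => u i j) = a)

/-- `S` is a subuniverse of the algebra `⟨A, ops⟩`. -/
def IsSubuniverse (ops : ∀ i, (Fin (arity i) → A) → A) (S : Set A) : Prop :=
  ∀ (i : ι) (x : Fin (arity i) → A), (∀ j, x j ∈ S) → ops i x ∈ S

/-- The operations of `⟨A, ops⟩` restricted to a subuniverse `S`. -/
def subOps (ops : ∀ i, (Fin (arity i) → A) → A) {S : Set A} (hS : IsSubuniverse ops S) :
    ∀ i, (Fin (arity i) → S) → S :=
  fun i x => ⟨ops i (fun j => (x j : A)), hS i _ (fun j => (x j).2)⟩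

/-- Membership in the subuniverse generated by `S`. -/
inductive Closure (ops : ∀ i, (Fin (arity i) → A) → A) (S : Set A) : A → Prop
  | base {x : A} : x ∈ S → Closure ops S x
  | app (i : ι) (x : Fin (arity i) → A) : (∀ j, Closure ops S (x j)) → Closure ops S (ops i x)

/-- `t` is an idempotent term of `⟨A, ops⟩`. -/
def IsIdemTerm (ops : ∀ i, (Fin (arity i) → A) → A) {k : ℕ} (t : AlgTerm ι arity k) : Prop :=
  ∀ x : A, t.eval ops (fun _ => x) = x

/-- `S` is a subuniverse of the idempotent reduct of `⟨A, ops⟩`, i.e. `S` is closed under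
all idempotent term operations of `⟨A, ops⟩`. -/
def IsSubuniverseI (ops : ∀ i, (Fin (arity i) → A) → A) (S : Set A) : Prop :=
  ∀ (k : ℕ) (t : AlgTerm ι arity k), IsIdemTerm ops t →
    ∀ x : Fin k → A, (∀ i, x i ∈ S) → t.eval ops x ∈ S

/-- The relation `a ≺ b` relative to the idempotent terms of `⟨A, ops⟩`. -/
def PrecI (ops : ∀ i, (Fin (arity i) → A) → A) (a b : A) : Prop :=
  ∃ k m : ℕ, 0 < k ∧ 0 < m ∧ ∃ t : AlgTerm ι arity k, IsIdemTerm ops t ∧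
    ∃ u : Fin k → Fin m → A,
      (∀ i j, u i j = a ∨ u i j = b) ∧
      (∀ i, ∃ j, u i j ≠ a) ∧
      (∀ j, t.eval ops (fun i => u i j) = a)

/-- The algebra induced on the set `S` by the idempotent term operations of `⟨A, ops⟩`
has a cube term. -/
def HasCubeTermOnI (ops : ∀ i, (Fin (arity i) → A) → A) (S : Set A) : Prop :=
  ∃ k : ℕ, 0 < k ∧ ∃ t : AlgTerm ι arity k, IsIdemTerm ops t ∧
    ∀ i : Fin k, ∃ u : Fin k → Bool, u i = true ∧
      ∀ x y : A, x ∈ S → y ∈ S → t.eval ops (fun j => if u j then y else x) = x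

/-- The coordinatewise action of the operations of `⟨A, ops⟩` on `A^ℤ`. -/
def powOps (ops : ∀ i, (Fin (arity i) → A) → A) :
    ∀ i, (Fin (arity i) → (ℤ → A)) → (ℤ → A) :=
  fun i x j => ops i fun m => x m j

/-- The element `α_{i_1 ⋯ i_k}` of `A^ℤ`, where `I = {i_1, …, i_k}`. -/
noncomputable def alphaFn (n : ℕ) (aIdx : ℤ → A) (a b : A) (I : Finset ℤ) : ℤ → A :=
  fun j => if j ∈ Finset.Icc (-(n : ℤ)) 0 then aIdx j else if j ∈ I then b else a

/-- The set `C_0 = {α_i : i ∈ ℤ ∖ [-n,0]}`. -/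
def C0set (n : ℕ) (aIdx : ℤ → A) (a b : A) : Set (ℤ → A) :=
  {x | ∃ i : ℤ, i ∉ Finset.Icc (-(n : ℤ)) 0 ∧ x = alphaFn n aIdx a b {i}}

/-- `θ` is a congruence of the subalgebra with universe `C`: an equivalence relation on `C`
compatible with all the operations. -/
def IsCongOn (ops : ∀ i, (Fin (arity i) → A) → A) (C : Set A) (θ : A → A → Prop) : Prop :=
  (∀ x ∈ C, θ x x) ∧
  (∀ x ∈ C, ∀ y ∈ C, θ x y → θ y x) ∧
  (∀ x ∈ C, ∀ y ∈ C, ∀ z ∈ C, θ x y → θ y z → θ x z) ∧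
  (∀ (i : ι) (x y : Fin (arity i) → A), (∀ j, x j ∈ C) → (∀ j, y j ∈ C) →
    (∀ j, θ (x j) (y j)) → θ (ops i x) (ops i y))

/-- `t` is a weak near unanimity term for `⟨A, ops⟩`. -/
def IsWNU (ops : ∀ i, (Fin (arity i) → A) → A) {k : ℕ} (t : AlgTerm ι arity k) : Prop :=
  2 ≤ k ∧ (∀ x : A, t.eval ops (fun _ => x) = x) ∧
  ∀ (x y : A) (i i' : Fin k),
    t.eval ops (Function.update (fun _ => x) i y) =
      t.eval ops (Function.update (fun _ => x) i' y)

/-! Call `v : ℕ → A` reachable if some idempotent term sends the vectors `e_d` (`b` at `d`, `a`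
elsewhere) to `v`. Minimality of `B` makes `(b, b, a, a, …)` reachable: otherwise
`U = {x | (x, b, a, …) reachable}` is a proper subuniverse of `B` containing `a`, so it has a cube
term and the blocker forces `U ∩ D = ∅`. Then `E = {x | (x, y, a, …) reachable for some y ∈ D}`
misses `b` (swap the first two coordinates), yet the WNU term makes
`(w(b,a,…,a), w(a,b,…,b), a, …)` reachable with both entries in `D`, so `E` meets `D`; being
proper, `E` would then lie in `D`, contradicting `a ∈ E`.

Transporting the witnessing term along an injection `ℕ → ℤ` with `0 ↦ x`, `1 ↦ y` writes
`α_{xy}` as a term in the generators `α_z`; compatibility of `θ` with that term relates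
`α_{xy}` and `α_{x'y'}` whenever `α_x θ α_{x'}` and `α_y θ α_{y'}`. -/

def AlgTerm.bind {k k' : ℕ} (σ : Fin k → AlgTerm ι arity k') :
    AlgTerm ι arity k → AlgTerm ι arity k'
  | .var j => σ j
  | .app i ts => .app i fun m => (ts m).bind σ

section Terms

variable (ops : ∀ i, (Fin (arity i) → A) → A)

theorem AlgTerm.eval_bind {k k' : ℕ} (σ : Fin k → AlgTerm ι arity k') (t : AlgTerm ι arity k)
    (v : Fin k' → A) : (t.bind σ).eval ops v = t.eval ops fun i => (σ i).eval ops v := by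
  induction t with
  | var j => rfl
  | app i ts ih => exact congrArg (ops i) (funext ih)

theorem AlgTerm.eval_powOps_apply {k : ℕ} (t : AlgTerm ι arity k) (g : Fin k → ℤ → A) (j : ℤ) :
    t.eval (powOps ops) g j = t.eval ops fun i => g i j := by
  induction t with
  | var i => rfl
  | app i ts ih => exact congrArg (ops i) (funext ih)

theorem Closure.algTerm_eval {S : Set A} {k : ℕ} (t : AlgTerm ι arity k) {g : Fin k → A}
    (hg : ∀ i, Closure ops S (g i)) : Closure ops S (t.eval ops g) := by
  induction t with
  | var i => exact hg i
  | app i ts ih => exact Closure.app i _ ih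

theorem IsCongOn.algTerm_eval {S : Set A} {θ : A → A → Prop} (hθ : IsCongOn ops (Closure ops S) θ)
    {k : ℕ} (t : AlgTerm ι arity k) {x y : Fin k → A} (hx : ∀ i, Closure ops S (x i))
    (hy : ∀ i, Closure ops S (y i)) (hxy : ∀ i, θ (x i) (y i)) :
    θ (t.eval ops x) (t.eval ops y) := by
  induction t with
  | var i => exact hxy i
  | app i ts ih =>
    exact hθ.2.2.2 i _ _ (fun m => Closure.algTerm_eval ops (ts m) hx)
      (fun m => Closure.algTerm_eval ops (ts m) hy) ih

theorem isSubuniverseI_singleton (b : A) : IsSubuniverseI ops {b} := by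
  intro k t ht x hx
  obtain rfl : x = fun _ => b := funext hx
  exact ht b

end Terms

/-- `v` lies in the subuniverse of the idempotent reduct of `A^ℕ` generated by the vectors
`e_d` (`b` in coordinate `d`, `a` elsewhere); `t` is evaluated at `e_{blk i}`. -/
def Reachable (ops : ∀ i, (Fin (arity i) → A) → A) (a b : A) (v : ℕ → A) : Prop :=
  ∃ (k : ℕ) (t : AlgTerm ι arity k) (blk : Fin k → ℕ), IsIdemTerm ops t ∧
    ∀ c, t.eval ops (fun i => if blk i = c then b else a) = v c

def pairVec (a x y : A) : ℕ → A
  | 0 => x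
  | 1 => y
  | _ + 2 => a

theorem pairVec_comp_swap (a x y : A) : pairVec a x y ∘ Equiv.swap 0 1 = pairVec a y x := by
  funext c
  rcases c with _ | _ | c
  · rfl
  · rfl
  · simp [pairVec, Equiv.swap_apply_of_ne_of_ne]

namespace Reachable

variable {ops : ∀ i, (Fin (arity i) → A) → A} {a b : A}

theorem unit (d : ℕ) : Reachable ops a b fun c => if d = c then b else a :=
  ⟨1, .var 0, fun _ => d, fun _ => rfl, fun _ => rfl⟩

theorem comp_perm {v : ℕ → A} (hv : Reachable ops a b v) (σ : Equiv.Perm ℕ) :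
    Reachable ops a b (v ∘ σ) := by
  obtain ⟨k, t, blk, ht, hval⟩ := hv
  refine ⟨k, t, σ.symm ∘ blk, ht, fun c => ?_⟩
  simp only [Function.comp_apply, Equiv.symm_apply_eq, ← hval]

theorem algTerm_eval {j : ℕ} (s : AlgTerm ι arity j) (hs : IsIdemTerm ops s) {v : Fin j → ℕ → A}
    (hv : ∀ i, Reachable ops a b (v i)) :
    Reachable ops a b fun c => s.eval ops fun i => v i c := by
  choose k t blk ht hval using hv
  let e := (finSigmaFinEquiv (n := k)).symm
  refine ⟨_, s.bind fun i => (t i).bind fun x => .var (finSigmaFinEquiv ⟨i, x⟩),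
    fun p => Sigma.uncurry blk (e p), fun x => ?_, fun c => ?_⟩
  · have hinner : (fun i => (t i).eval ops fun _ => x) = fun _ => x := funext fun i => ht i x
    simp only [AlgTerm.eval_bind, AlgTerm.eval, hinner, hs x]
  · have hinner (i : Fin j) : ((t i).bind fun x => .var (finSigmaFinEquiv ⟨i, x⟩)).eval ops
        (fun p => if Sigma.uncurry blk (e p) = c then b else a) = v i c := by
      simp only [AlgTerm.eval_bind, AlgTerm.eval, e, Equiv.symm_apply_apply]
      exact hval i c
    simp only [AlgTerm.eval_bind, hinner]

theorem mem {B : Set A} (hB : IsSubuniverseI ops B) (ha : a ∈ B) (hb : b ∈ B) {v : ℕ → A}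
    (hv : Reachable ops a b v) (c : ℕ) : v c ∈ B := by
  obtain ⟨k, t, blk, ht, hval⟩ := hv
  rw [← hval c]
  exact hB k t ht _ fun i => by split_ifs <;> assumption

end Reachable

section CubeTermBlocker

variable (ops : ∀ i, (Fin (arity i) → A) → A) {a b : A} {B D : Set A}

def BlocksCubeTerms (D B : Set A) : Prop :=
  ∀ k : ℕ, 0 < k → ∀ t : AlgTerm ι arity k, IsIdemTerm ops t →
    ∃ i : Fin k, ∀ x : Fin k → A, (∀ j, x j ∈ B) → x i ∈ D → t.eval ops x ∈ D

theorem subset_of_hasCubeTermOnI (hBlock : BlocksCubeTerms ops D B) {S : Set A} (hSB : S ⊆ B)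
    (hS : HasCubeTermOnI ops S) {z : A} (hzS : z ∈ S) (hzD : z ∈ D) : S ⊆ D := by
  intro x hx
  obtain ⟨k, hk, t, ht, hcube⟩ := hS
  obtain ⟨i, hi⟩ := hBlock k hk t ht
  obtain ⟨u, hui, hid⟩ := hcube i
  rw [← hid x z hx hzS]
  exact hi _ (fun j => by split_ifs <;> exact hSB ‹_›) (by simpa [hui] using hzD)

theorem notMem_of_isSubuniverseI_of_notMem
    (hBmin : ∀ S : Set A, S ⊆ B → S ≠ B → S.Nonempty → IsSubuniverseI ops S →
      HasCubeTermOnI ops S)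
    (hBlock : BlocksCubeTerms ops D B) (haD : a ∉ D) (hbB : b ∈ B) {S : Set A} (hSB : S ⊆ B)
    (hS : IsSubuniverseI ops S) (haS : a ∈ S) (hbS : b ∉ S) {z : A} (hzS : z ∈ S) : z ∉ D :=
  fun hzD => haD <| subset_of_hasCubeTermOnI ops hBlock hSB
    (hBmin S hSB (fun h => hbS (h ▸ hbB)) ⟨a, haS⟩ hS) hzS hzD haS

def pairFst (a b : A) (T : Set A) : Set A :=
  {x | ∃ y ∈ T, Reachable ops a b (pairVec a x y)}

theorem isSubuniverseI_pairFst {T : Set A} (hT : IsSubuniverseI ops T) :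
    IsSubuniverseI ops (pairFst ops a b T) := by
  intro k t ht x hx
  choose y hyT hy using hx
  refine ⟨t.eval ops y, hT k t ht y hyT, ?_⟩
  convert Reachable.algTerm_eval t ht hy using 1
  funext c
  rcases c with _ | _ | c
  · rfl
  · rfl
  · exact (ht a).symm

theorem pairFst_subset (hB : IsSubuniverseI ops B) (ha : a ∈ B) (hb : b ∈ B) (T : Set A) :
    pairFst ops a b T ⊆ B :=
  fun _ ⟨_, _, hv⟩ => hv.mem hB ha hb 0

theorem reachable_pairVec_self_left : Reachable ops a b (pairVec a a b) := by
  convert Reachable.unit (ops := ops) (a := a) (b := b) 1 using 1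
  funext c
  rcases c with _ | _ | c <;> simp [pairVec]

theorem exists_reachable_pairVec_of_isWNU (hBlock : BlocksCubeTerms ops D B) (ha : a ∈ B)
    (hbD : b ∈ D) (hDB : D ⊆ B) {k : ℕ} {w : AlgTerm ι arity k} (hw : IsWNU ops w) :
    ∃ d ∈ D, ∃ c ∈ D, Reachable ops a b (pairVec a d c) := by
  obtain ⟨hk, hidem, hsym⟩ := hw
  obtain ⟨m, rfl⟩ := Nat.exists_eq_add_of_le' hk
  obtain ⟨iw, hiw⟩ := hBlock _ (by omega) w hidem
  obtain ⟨jw, hjw⟩ := exists_ne iw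
  have hupd {x y : A} (hx : x ∈ B) (hy : y ∈ B) (i : Fin (m + 2)) (j : Fin (m + 2)) :
      Function.update (fun _ => x) i y j ∈ B := by
    rw [Function.update_apply]; split_ifs <;> assumption
  -- `d = w(b,a,…,a)` and `c = w(a,b,…,b)`: moving the odd entry off (or onto) the blocking
  -- position `iw` puts `b ∈ D` there
  refine ⟨w.eval ops (Function.update (fun _ => a) 0 b), ?_,
    w.eval ops (Function.update (fun _ => b) 0 a), ?_,
    _, w, fun i => if i = 0 then 0 else 1, hidem, fun c => ?_⟩
  · rw [hsym a b 0 iw]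
    exact hiw _ (hupd ha (hDB hbD) iw) (by simpa using hbD)
  · rw [hsym b a 0 jw]
    exact hiw _ (hupd (hDB hbD) ha jw) (by simpa [Function.update_apply, hjw.symm] using hbD)
  · rcases c with _ | _ | c
    · congr 1; funext i; by_cases h : i = 0 <;> simp [h]
    · congr 1; funext i; by_cases h : i = 0 <;> simp [h]
    · have hne (i : Fin (m + 2)) : (if i = 0 then 0 else 1) ≠ c + 2 := by split_ifs <;> omega
      simp only [hne, if_false]
      exact hidem a

theorem reachable_pairVec_of_blocksCubeTerms (hB : IsSubuniverseI ops B)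
    (hBmin : ∀ S : Set A, S ⊆ B → S ≠ B → S.Nonempty → IsSubuniverseI ops S →
      HasCubeTermOnI ops S)
    (hD : IsSubuniverseI ops D) (hDB : D ⊆ B) (hBlock : BlocksCubeTerms ops D B) (ha : a ∈ B)
    (haD : a ∉ D) (hbD : b ∈ D) {k : ℕ} {w : AlgTerm ι arity k} (hw : IsWNU ops w) :
    Reachable ops a b (pairVec a b b) := by
  have hb : b ∈ B := hDB hbD
  by_contra hbb
  have hU (z : A) (hz : z ∈ pairFst ops a b {b}) : z ∉ D :=
    notMem_of_isSubuniverseI_of_notMem ops hBmin hBlock haD hb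
      (pairFst_subset ops hB ha hb _) (isSubuniverseI_pairFst ops (isSubuniverseI_singleton ops b))
      ⟨b, rfl, reachable_pairVec_self_left ops⟩ (fun ⟨_, hy, hv⟩ => hbb (hy ▸ hv)) hz
  have hbE : b ∉ pairFst ops a b D := fun ⟨y, hyD, hv⟩ =>
    hU y ⟨b, rfl, pairVec_comp_swap a b y ▸ hv.comp_perm (Equiv.swap 0 1)⟩ hyD
  obtain ⟨d, hdD, c, hcD, hdc⟩ := exists_reachable_pairVec_of_isWNU ops hBlock ha hbD hDB hw
  exact notMem_of_isSubuniverseI_of_notMem ops hBmin hBlock haD hb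
    (pairFst_subset ops hB ha hb _) (isSubuniverseI_pairFst ops hD)
    ⟨b, hbD, reachable_pairVec_self_left ops⟩ hbE ⟨c, hcD, hdc⟩ hdD

end CubeTermBlocker

section PowerAlgebra

variable (ops : ∀ i, (Fin (arity i) → A) → A) (n : ℕ) (aIdx : ℤ → A) {a b : A}

def pairCoords (x y M : ℤ) : ℕ → ℤ
  | 0 => x
  | 1 => y
  | d + 2 => M + d

theorem pairCoords_injective {x y M : ℤ} (hxy : x ≠ y) (hx : x < M) (hy : y < M) :
    Function.Injective (pairCoords x y M) := by
  intro d d' h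
  rcases d with _ | _ | d <;> rcases d' with _ | _ | d' <;> simp [pairCoords] at h ⊢ <;> omega

theorem pairCoords_not_mem_Icc {x y M : ℤ} (hx : x ∉ Finset.Icc (-(n : ℤ)) 0)
    (hy : y ∉ Finset.Icc (-(n : ℤ)) 0) (hM : 0 < M) (d : ℕ) :
    pairCoords x y M d ∉ Finset.Icc (-(n : ℤ)) 0 := by
  rcases d with _ | _ | d
  · exact hx
  · exact hy
  · simp only [pairCoords, Finset.mem_Icc]
    omega

theorem algTerm_eval_alphaFn {k : ℕ} {t : AlgTerm ι arity k} (ht : IsIdemTerm ops t)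
    {blk : Fin k → ℕ} (hv : ∀ c, t.eval ops (fun i => if blk i = c then b else a) = pairVec a b b c)
    {co : ℕ → ℤ} (hco : Function.Injective co) {x y : ℤ} (h0 : co 0 = x) (h1 : co 1 = y) :
    t.eval (powOps ops) (fun i => alphaFn n aIdx a b {co (blk i)}) =
      alphaFn n aIdx a b {x, y} := by
  subst h0 h1
  funext j
  rw [AlgTerm.eval_powOps_apply]
  by_cases hj : j ∈ Finset.Icc (-(n : ℤ)) 0
  · simpa [alphaFn, hj] using ht (aIdx j)
  by_cases hjco : j ∈ Set.range co
  · obtain ⟨e, rfl⟩ := hjco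
    have hcoord : (fun i => alphaFn n aIdx a b {co (blk i)} (co e)) =
        fun i => if blk i = e then b else a := by
      funext i
      simp [alphaFn, hj, hco.eq_iff, eq_comm]
    rw [hcoord, hv]
    rcases e with _ | _ | e <;> simp [alphaFn, hj, pairVec, hco.eq_iff]
  · simp only [Set.mem_range, not_exists] at hjco
    simpa [alphaFn, hj, Ne.symm (hjco _)] using ht a

variable {ops n aIdx} {k : ℕ} {t : AlgTerm ι arity k} {blk : Fin k → ℕ}

theorem alphaFn_mem_closure {z : ℤ} (hz : z ∉ Finset.Icc (-(n : ℤ)) 0) :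
    Closure (powOps ops) (C0set n aIdx a b) (alphaFn n aIdx a b {z}) :=
  Closure.base ⟨z, hz, rfl⟩

theorem alphaFn_pair_mem_closure (ht : IsIdemTerm ops t)
    (hv : ∀ c, t.eval ops (fun i => if blk i = c then b else a) = pairVec a b b c)
    {x y : ℤ} (hxy : x ≠ y) (hx : x ∉ Finset.Icc (-(n : ℤ)) 0)
    (hy : y ∉ Finset.Icc (-(n : ℤ)) 0) :
    Closure (powOps ops) (C0set n aIdx a b) (alphaFn n aIdx a b {x, y}) := by
  obtain ⟨M, hM, hxM, hyM⟩ : ∃ M : ℤ, 0 < M ∧ x < M ∧ y < M := ⟨max (max x y) 0 + 1, by omega⟩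
  rw [← algTerm_eval_alphaFn ops n aIdx ht hv (pairCoords_injective hxy hxM hyM)
    (x := x) (y := y) rfl rfl]
  exact Closure.algTerm_eval _ t fun i =>
    alphaFn_mem_closure (pairCoords_not_mem_Icc n hx hy hM _)

theorem IsCongOn.alphaFn_pair {θ : (ℤ → A) → (ℤ → A) → Prop}
    (hθ : IsCongOn (powOps ops) (Closure (powOps ops) (C0set n aIdx a b)) θ)
    (ht : IsIdemTerm ops t)
    (hv : ∀ c, t.eval ops (fun i => if blk i = c then b else a) = pairVec a b b c)
    {x y x' y' : ℤ} (hxy : x ≠ y) (hxy' : x' ≠ y')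
    (hx : x ∉ Finset.Icc (-(n : ℤ)) 0) (hy : y ∉ Finset.Icc (-(n : ℤ)) 0)
    (hx' : x' ∉ Finset.Icc (-(n : ℤ)) 0) (hy' : y' ∉ Finset.Icc (-(n : ℤ)) 0)
    (hθx : θ (alphaFn n aIdx a b {x}) (alphaFn n aIdx a b {x'}))
    (hθy : θ (alphaFn n aIdx a b {y}) (alphaFn n aIdx a b {y'})) :
    θ (alphaFn n aIdx a b {x, y}) (alphaFn n aIdx a b {x', y'}) := by
  obtain ⟨M, hM, hxM, hyM, hxM', hyM'⟩ : ∃ M : ℤ, 0 < M ∧ x < M ∧ y < M ∧ x' < M ∧ y' < M :=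
    ⟨max (max (max x y) (max x' y')) 0 + 1, by omega⟩
  have hout := pairCoords_not_mem_Icc n hx hy hM
  have hout' := pairCoords_not_mem_Icc n hx' hy' hM
  rw [← algTerm_eval_alphaFn ops n aIdx ht hv (pairCoords_injective hxy hxM hyM)
    (x := x) (y := y) rfl rfl,
    ← algTerm_eval_alphaFn ops n aIdx ht hv (pairCoords_injective hxy' hxM' hyM')
    (x := x') (y := y') rfl rfl]
  refine hθ.algTerm_eval _ t (fun i => alphaFn_mem_closure (hout _))
    (fun i => alphaFn_mem_closure (hout' _)) fun i => ?_
  rcases blk i with _ | _ | d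
  · exact hθx
  · exact hθy
  · exact hθ.1 _ (alphaFn_mem_closure (hout (d + 2)))

end PowerAlgebra

theorem stmt_4_general
    {ι A : Type} {arity : ι → ℕ}
    (ops : ∀ i : ι, (Fin (arity i) → A) → A)
    -- the universe of `A` is enumerated as `{a_0, a_{-1}, …, a_{-n}}`
    (n : ℕ) (aIdx : ℤ → A)
    -- `B` is a subuniverse of the idempotent reduct `A_I`, without a cube term,
    -- minimal for this property
    (B : Set A) (hBsub : IsSubuniverseI ops B)
    (hBmin : ∀ S : Set A, S ⊆ B → S ≠ B → S.Nonempty → IsSubuniverseI ops S →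
      HasCubeTermOnI ops S)
    -- `(D, B)` is a cube term blocker for the algebra `B`
    (D : Set A) (hDsub : IsSubuniverseI ops D)
    (hDB : D ⊆ B)
    (hBlock : ∀ k : ℕ, 0 < k → ∀ t : AlgTerm ι arity k, IsIdemTerm ops t →
      ∃ i : Fin k, ∀ x : Fin k → A, (∀ j, x j ∈ B) → x i ∈ D → t.eval ops x ∈ D)
    -- `a ∈ B ∖ D` and `b ∈ D` with `a ⊀ b` relative to the idempotent terms of `A`
    (a b : A) (haB : a ∈ B) (haD : a ∉ D) (hbD : b ∈ D)
    -- `A` has a weak near unanimity term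
    (hWNU : ∃ (k : ℕ) (w : AlgTerm ι arity k), IsWNU ops w)
    -- `θ` is a congruence of `C = Sg^{A^ℤ}(C_0)`
    (θ : (ℤ → A) → (ℤ → A) → Prop)
    (hθ : IsCongOn (powOps ops) (Closure (powOps ops) (C0set n aIdx a b)) θ)
    -- `p, q, r, s` are distinct indices in `ℤ ∖ [-n,0]`
    (p q r s : ℤ)
    (hp : p ∉ Finset.Icc (-(n : ℤ)) 0) (hq : q ∉ Finset.Icc (-(n : ℤ)) 0)
    (hr : r ∉ Finset.Icc (-(n : ℤ)) 0) (hs : s ∉ Finset.Icc (-(n : ℤ)) 0)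
    (hpq : p ≠ q) (hps : p ≠ s)
    (hqr : q ≠ r) (hrs : r ≠ s)
    (hθpr : θ (alphaFn n aIdx a b {p}) (alphaFn n aIdx a b {r}))
    (hθqs : θ (alphaFn n aIdx a b {q}) (alphaFn n aIdx a b {s})) :
    (Closure (powOps ops) (C0set n aIdx a b) (alphaFn n aIdx a b {p, q})) ∧
    (Closure (powOps ops) (C0set n aIdx a b) (alphaFn n aIdx a b {r, q})) ∧
    (Closure (powOps ops) (C0set n aIdx a b) (alphaFn n aIdx a b {p, s})) ∧
    (Closure (powOps ops) (C0set n aIdx a b) (alphaFn n aIdx a b {r, s})) ∧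
    θ (alphaFn n aIdx a b {p, q}) (alphaFn n aIdx a b {r, q}) ∧
    θ (alphaFn n aIdx a b {p, q}) (alphaFn n aIdx a b {p, s}) ∧
    θ (alphaFn n aIdx a b {p, q}) (alphaFn n aIdx a b {r, s}) ∧
    θ (alphaFn n aIdx a b {r, q}) (alphaFn n aIdx a b {p, s}) ∧
    θ (alphaFn n aIdx a b {r, q}) (alphaFn n aIdx a b {r, s}) ∧
    θ (alphaFn n aIdx a b {p, s}) (alphaFn n aIdx a b {r, s}) := by
  obtain ⟨_, w, hw⟩ := hWNU
  obtain ⟨k, t, blk, ht, hv⟩ := reachable_pairVec_of_blocksCubeTerms ops hBsub hBmin hDsub hDB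
    hBlock haB haD hbD hw
  have hθrp := hθ.2.1 _ (alphaFn_mem_closure hp) _ (alphaFn_mem_closure hr) hθpr
  exact ⟨alphaFn_pair_mem_closure ht hv hpq hp hq, alphaFn_pair_mem_closure ht hv hqr.symm hr hq,
    alphaFn_pair_mem_closure ht hv hps hp hs, alphaFn_pair_mem_closure ht hv hrs hr hs,
    hθ.alphaFn_pair ht hv hpq hqr.symm hp hq hr hq hθpr (hθ.1 _ (alphaFn_mem_closure hq)),
    hθ.alphaFn_pair ht hv hpq hps hp hq hp hs (hθ.1 _ (alphaFn_mem_closure hp)) hθqs,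
    hθ.alphaFn_pair ht hv hpq hrs hp hq hr hs hθpr hθqs,
    hθ.alphaFn_pair ht hv hqr.symm hps hr hq hp hs hθrp hθqs,
    hθ.alphaFn_pair ht hv hqr.symm hrs hr hq hr hs (hθ.1 _ (alphaFn_mem_closure hr)) hθqs,
    hθ.alphaFn_pair ht hv hps hrs hp hs hr hs hθpr (hθ.1 _ (alphaFn_mem_closure hs))⟩

/-- In the standing setup, if `A` has a weak near unanimity term, `θ` is a
congruence of `C`, and `p, q, r, s` are distinct indices outside `[-n,0]` with
`α_p θ α_r` and `α_q θ α_s`, then `α_{pq}, α_{rq}, α_{ps}, α_{rs}` all belong to `C`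
and are pairwise `θ`-related. -/
theorem stmt_4
    {ι A : Type} {arity : ι → ℕ} [Fintype A]
    (ops : ∀ i : ι, (Fin (arity i) → A) → A)
    -- the universe of `A` is enumerated as `{a_0, a_{-1}, …, a_{-n}}`
    (n : ℕ) (aIdx : ℤ → A)
    (hEnumSurj : ∀ x : A, ∃ j ∈ Finset.Icc (-(n : ℤ)) 0, aIdx j = x)
    (hEnumInj : ∀ j ∈ Finset.Icc (-(n : ℤ)) 0, ∀ j' ∈ Finset.Icc (-(n : ℤ)) 0,
      aIdx j = aIdx j' → j = j')
    -- `A` has no cube term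
    (hNoCube : ¬ HasCubeTerm ops)
    -- `B` is a subuniverse of the idempotent reduct `A_I`, without a cube term,
    -- minimal for this property
    (B : Set A) (hBsub : IsSubuniverseI ops B)
    (hBnoCube : ¬ HasCubeTermOnI ops B)
    (hBmin : ∀ S : Set A, S ⊆ B → S ≠ B → S.Nonempty → IsSubuniverseI ops S →
      HasCubeTermOnI ops S)
    -- `(D, B)` is a cube term blocker for the algebra `B`
    (D : Set A) (hDsub : IsSubuniverseI ops D) (hDne : D.Nonempty)
    (hDB : D ⊆ B) (hDproper : D ≠ B)
    (hBlock : ∀ k : ℕ, 0 < k → ∀ t : AlgTerm ι arity k, IsIdemTerm ops t →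
      ∃ i : Fin k, ∀ x : Fin k → A, (∀ j, x j ∈ B) → x i ∈ D → t.eval ops x ∈ D)
    -- `a ∈ B ∖ D` and `b ∈ D` with `a ⊀ b` relative to the idempotent terms of `A`
    (a b : A) (haB : a ∈ B) (haD : a ∉ D) (hbD : b ∈ D)
    (hab : ¬ PrecI ops a b)
    -- `A` has a weak near unanimity term
    (hWNU : ∃ (k : ℕ) (w : AlgTerm ι arity k), IsWNU ops w)
    -- `θ` is a congruence of `C = Sg^{A^ℤ}(C_0)`
    (θ : (ℤ → A) → (ℤ → A) → Prop)
    (hθ : IsCongOn (powOps ops) (Closure (powOps ops) (C0set n aIdx a b)) θ)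
    -- `p, q, r, s` are distinct indices in `ℤ ∖ [-n,0]`
    (p q r s : ℤ)
    (hp : p ∉ Finset.Icc (-(n : ℤ)) 0) (hq : q ∉ Finset.Icc (-(n : ℤ)) 0)
    (hr : r ∉ Finset.Icc (-(n : ℤ)) 0) (hs : s ∉ Finset.Icc (-(n : ℤ)) 0)
    (hpq : p ≠ q) (hpr : p ≠ r) (hps : p ≠ s)
    (hqr : q ≠ r) (hqs : q ≠ s) (hrs : r ≠ s)
    (hθpr : θ (alphaFn n aIdx a b {p}) (alphaFn n aIdx a b {r}))
    (hθqs : θ (alphaFn n aIdx a b {q}) (alphaFn n aIdx a b {s})) :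
    (Closure (powOps ops) (C0set n aIdx a b) (alphaFn n aIdx a b {p, q})) ∧
    (Closure (powOps ops) (C0set n aIdx a b) (alphaFn n aIdx a b {r, q})) ∧
    (Closure (powOps ops) (C0set n aIdx a b) (alphaFn n aIdx a b {p, s})) ∧
    (Closure (powOps ops) (C0set n aIdx a b) (alphaFn n aIdx a b {r, s})) ∧
    θ (alphaFn n aIdx a b {p, q}) (alphaFn n aIdx a b {r, q}) ∧
    θ (alphaFn n aIdx a b {p, q}) (alphaFn n aIdx a b {p, s}) ∧
    θ (alphaFn n aIdx a b {p, q}) (alphaFn n aIdx a b {r, s}) ∧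
    θ (alphaFn n aIdx a b {r, q}) (alphaFn n aIdx a b {p, s}) ∧
    θ (alphaFn n aIdx a b {r, q}) (alphaFn n aIdx a b {r, s}) ∧
    θ (alphaFn n aIdx a b {p, s}) (alphaFn n aIdx a b {r, s}) :=
  stmt_4_general ops n aIdx B hBsub hBmin D hDsub hDB hBlock a b haB haD hbD hWNU θ hθ p q r s hp hq
    hr hs hpq hps hqr hrs hθpr hθqs
end

section
/- Assume the standing setup, and assume additionally that A has a weak near unanimity term. Let θ be a congruence of C and let p, q, r, s be four distinct indices in ℤ ∖ [-n,0] with α_p θ α_r and α_q θ α_s. Then the set {α_{mn} : (m,n) ∈ {p,r} × {q,s}} ∪ {α_{mnk} : (m,n,k) ∈ {p,r} × {q,s} × {p,q,r,s}} is contained in C and is contained in a single θ-class. -/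
variable {ι : Type} {arity : ι → ℕ} {A : Type}

/-- The family `{α_{mn} : (m,n) ∈ {p,r} × {q,s}} ∪
`{α_{mnk} : (m,n,k) ∈ {p,r} × {q,s} × {p,q,r,s}}`. -/
def famSet (n : ℕ) (aIdx : ℤ → A) (a b : A) (p q r s : ℤ) : Set (ℤ → A) :=
  {x | ∃ m' ∈ ({p, r} : Finset ℤ), ∃ w ∈ ({q, s} : Finset ℤ),
    x = alphaFn n aIdx a b {m', w} ∨
      ∃ k' ∈ ({p, q, r, s} : Finset ℤ), x = alphaFn n aIdx a b {m', w, k'}}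

/-!
Everything rests on a binary idempotent term `f` with `f(a,b) = f(b,a) = b`. Call `y` robust if
it is the value of an idempotent term on `{a,b}`-tuples that may carry `b` in any prescribed
variable. A cube term on a set containing `a` and a robust element would witness `a ≺ b`; so, by
minimality of `B`, every subuniverse of `A_I` inside `B` containing `a` and a robust element
contains `b`. Robust elements form a subuniverse of `A_I`, and for a WNU term `w` both
`s = w(b,a,…,a)` and `e = w(a,b,…,b)` are robust. Hence `b ∈ Sg(a, s)`, which yields a pair
`(b, z) ∈ Sg((a,b), (s,e)) ⊆ Sg((a,b), (b,a))` with `z` robust, and then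
`(b, b) ∈ Sg((a,b), (b,a))`: this pair is `(f(a,b), f(b,a))` for some binary term `f`.

Applied coordinatewise, `f(α_I, α_J) = α_{I ∪ J}`. So every `α_K` with `∅ ≠ K ⊆ {p,q,r,s}` lies
in `C`. As `f` is compatible with `θ` and `α_p θ α_r`, `α_q θ α_s`, an index of `K ∪ {p,q}` can be
absorbed into a `θ`-equivalent one, so `α_K θ α_{K ∪ {p,q}} θ α_{pq}` as soon as `K` meets both
`{p,r}` and `{q,s}`.
-/

namespace AlgTerm

def subst {k k' : ℕ} : AlgTerm ι arity k → (Fin k → AlgTerm ι arity k') → AlgTerm ι arity k'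
  | var j, σ => σ j
  | app i ts, σ => app i fun m => (ts m).subst σ

theorem eval_subst (ops : ∀ i, (Fin (arity i) → A) → A) {k k' : ℕ} (t : AlgTerm ι arity k)
    (σ : Fin k → AlgTerm ι arity k') (v : Fin k' → A) :
    (t.subst σ).eval ops v = t.eval ops fun j => (σ j).eval ops v := by
  induction t with
  | var j => rfl
  | app i ts ih => simp only [subst, eval, ih]

/-- Plugs the terms `ts i` into `t`, with pairwise disjoint sets of variables. -/
def sigmaComp {k : ℕ} {m : Fin k → ℕ} (t : AlgTerm ι arity k)
    (ts : ∀ i, AlgTerm ι arity (m i)) : AlgTerm ι arity (∑ i, m i) :=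
  t.subst fun i => (ts i).subst fun l => var (finSigmaFinEquiv ⟨i, l⟩)

theorem eval_sigmaComp (ops : ∀ i, (Fin (arity i) → A) → A) {k : ℕ} {m : Fin k → ℕ}
    (t : AlgTerm ι arity k) (ts : ∀ i, AlgTerm ι arity (m i)) (P : (Σ i, Fin (m i)) → A) :
    (t.sigmaComp ts).eval ops (P ∘ finSigmaFinEquiv.symm) =
      t.eval ops fun i => (ts i).eval ops fun l => P ⟨i, l⟩ := by
  simp [sigmaComp, eval_subst, eval]

end AlgTerm

open AlgTerm

section IdempotentTerms

variable {ops : ∀ i, (Fin (arity i) → A) → A}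

theorem isIdemTerm_var {k : ℕ} (j : Fin k) : IsIdemTerm ops (var (ι := ι) (arity := arity) j) :=
  fun _ => rfl

theorem IsIdemTerm.subst {k k' : ℕ} {t : AlgTerm ι arity k} {σ : Fin k → AlgTerm ι arity k'}
    (ht : IsIdemTerm ops t) (hσ : ∀ j, IsIdemTerm ops (σ j)) : IsIdemTerm ops (t.subst σ) := by
  intro x
  simp only [eval_subst, fun j => hσ j x, ht x]

theorem IsIdemTerm.sigmaComp {k : ℕ} {m : Fin k → ℕ} {t : AlgTerm ι arity k}
    {ts : ∀ i, AlgTerm ι arity (m i)} (ht : IsIdemTerm ops t) (hts : ∀ i, IsIdemTerm ops (ts i)) :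
    IsIdemTerm ops (t.sigmaComp ts) :=
  ht.subst fun i => (hts i).subst fun _ => isIdemTerm_var _

theorem IsIdemTerm.eval_vecCons_self {f : AlgTerm ι arity 2} (hf : IsIdemTerm ops f) (x : A) :
    f.eval ops ![x, x] = x := by
  convert hf x using 2
  ext i
  fin_cases i <;> rfl

end IdempotentTerms

section Robust

variable (ops : ∀ i, (Fin (arity i) → A) → A) (a b : A)

def IsRobust (y : A) : Prop :=
  ∃ M : ℕ, 0 < M ∧ ∃ V : AlgTerm ι arity M, IsIdemTerm ops V ∧
    ∀ l : Fin M, ∃ π : Fin M → A, (∀ l', π l' = a ∨ π l' = b) ∧ π l = b ∧ V.eval ops π = y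

theorem isRobust_self : IsRobust ops a b b :=
  ⟨1, one_pos, var 0, isIdemTerm_var 0, fun _ => ⟨fun _ => b, fun _ => Or.inr rfl, rfl, rfl⟩⟩

theorem isSubuniverseI_setOf_isRobust : IsSubuniverseI ops {y | IsRobust ops a b y} := by
  intro k t ht ys hys
  rcases Nat.eq_zero_or_pos k with rfl | hk
  · rw [Subsingleton.elim ys fun _ => b, ht b]
    exact isRobust_self ops a b
  choose M hM V hV π hπab hπb hπV using hys
  refine ⟨∑ i, M i, Fin.pos_iff_nonempty.2 ⟨finSigmaFinEquiv ⟨⟨0, hk⟩, ⟨0, hM _⟩⟩⟩,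
    t.sigmaComp V, ht.sigmaComp hV, fun p => ?_⟩
  obtain ⟨⟨i, l⟩, rfl⟩ := finSigmaFinEquiv.surjective p
  -- in the block of `ys i` use the pattern with `b` at `l`, in every other block any pattern
  let sel : ∀ j, Fin (M j) := Function.update (fun j => ⟨0, hM j⟩) i l
  refine ⟨(fun q => π q.1 (sel q.1) q.2) ∘ finSigmaFinEquiv.symm,
    fun r => hπab (finSigmaFinEquiv.symm r).1 _ _, ?_, ?_⟩
  · rw [Function.comp_apply, Equiv.symm_apply_apply]
    simp [sel, hπb]
  · rw [eval_sigmaComp]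
    simp only [hπV]

variable {ops a b}

theorem IsWNU.isRobust_update_a {k : ℕ} {w : AlgTerm ι arity k} (hw : IsWNU ops w) (i : Fin k) :
    IsRobust ops a b (w.eval ops (Function.update (fun _ => a) i b)) := by
  refine ⟨k, by have := hw.1; omega, w, hw.2.1, fun l => ⟨Function.update (fun _ => a) l b,
    fun l' => ?_, Function.update_self .., hw.2.2 a b l i⟩⟩
  rw [Function.update_apply]
  split <;> simp

theorem IsWNU.isRobust_update_b {k : ℕ} {w : AlgTerm ι arity k} (hw : IsWNU ops w) (i : Fin k) :
    IsRobust ops a b (w.eval ops (Function.update (fun _ => b) i a)) := by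
  have : Nontrivial (Fin k) := Fin.nontrivial_iff_two_le.2 hw.1
  refine ⟨k, by have := hw.1; omega, w, hw.2.1, fun l => ?_⟩
  obtain ⟨l', hl'⟩ := exists_ne l
  refine ⟨Function.update (fun _ => b) l' a, fun l'' => ?_, Function.update_of_ne hl'.symm ..,
    hw.2.2 b a l' i⟩
  rw [Function.update_apply]
  split <;> simp

theorem precI_of_isRobust (hba : b ≠ a) {S : Set A} (hS : HasCubeTermOnI ops S) (haS : a ∈ S)
    {y : A} (hyS : y ∈ S) (hy : IsRobust ops a b y) : PrecI ops a b := by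
  obtain ⟨kc, hkc, tc, htc, hcube⟩ := hS
  choose U hUdiag hU using hcube
  obtain ⟨M, hM, V, hV, hπ⟩ := hy
  choose π hπab hπb hπV using hπ
  let e : (Σ _ : Fin kc, Fin M) ≃ Fin (∑ _ : Fin kc, M) := finSigmaFinEquiv
  -- column `⟨j, l⟩` is the `j`-th cube identity at `(a, y)`, with each `y` written as `V (π l)`
  let u (row col : Σ _ : Fin kc, Fin M) : A := if U col.1 row.1 then π col.2 row.2 else a
  have hpos : 0 < ∑ _ : Fin kc, M := Fin.pos_iff_nonempty.2 ⟨e ⟨⟨0, hkc⟩, ⟨0, hM⟩⟩⟩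
  refine ⟨_, _, hpos, hpos, tc.sigmaComp fun _ => V, htc.sigmaComp fun _ => hV,
    fun r c => u (e.symm r) (e.symm c), fun r c => ?_, fun r => ⟨r, ?_⟩, fun c => ?_⟩
  · simp only [u]
    split
    · exact hπab _ _
    · exact Or.inl rfl
  · simp [u, hUdiag, hπb, hba]
  · change (tc.sigmaComp fun _ => V).eval ops ((fun q => u q (e.symm c)) ∘ e.symm) = a
    rw [eval_sigmaComp]
    convert hU (e.symm c).1 a y haS hyS using 2
    funext i
    by_cases h : U (e.symm c).1 i <;> simp [u, h, hπV, hV a]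

theorem mem_of_isRobust {B : Set A}
    (hBmin : ∀ S : Set A, S ⊆ B → S ≠ B → S.Nonempty → IsSubuniverseI ops S →
      HasCubeTermOnI ops S)
    (hbB : b ∈ B) (hab : ¬ PrecI ops a b) (hba : b ≠ a) {S : Set A} (hS : IsSubuniverseI ops S)
    (hSB : S ⊆ B) (haS : a ∈ S) {y : A} (hyS : y ∈ S) (hy : IsRobust ops a b y) : b ∈ S := by
  by_contra hbS
  exact hab (precI_of_isRobust hba (hBmin S hSB (fun h => hbS (h ▸ hbB)) ⟨a, haS⟩ hS) haS hyS hy)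

end Robust

section IdemSpan

variable {ops : ∀ i, (Fin (arity i) → A) → A} {Y : Type}

variable (ops) in
def IsIdemClosed (R : Set (Y → A)) : Prop :=
  ∀ (k : ℕ) (t : AlgTerm ι arity k), IsIdemTerm ops t →
    ∀ x : Fin k → Y → A, (∀ i, x i ∈ R) → (fun y => t.eval ops fun i => x i y) ∈ R

variable (ops) in
/-- The subuniverse of `(A_I)^Y` generated by `G`. -/
def idemSpan (G : Set (Y → A)) : Set (Y → A) :=
  {r | ∃ (k : ℕ) (t : AlgTerm ι arity k), IsIdemTerm ops t ∧
    ∃ c : Fin k → Y → A, (∀ i, c i ∈ G) ∧ r = fun y => t.eval ops fun i => c i y}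

theorem subset_idemSpan {G : Set (Y → A)} : G ⊆ idemSpan ops G :=
  fun g hg => ⟨1, var 0, isIdemTerm_var 0, fun _ => g, fun _ => hg, rfl⟩

theorem idemSpan_subset {G R : Set (Y → A)} (hR : IsIdemClosed ops R) (hGR : G ⊆ R) :
    idemSpan ops G ⊆ R := by
  rintro _ ⟨k, t, ht, c, hc, rfl⟩
  exact hR k t ht c fun i => hGR (hc i)

theorem isIdemClosed_idemSpan {G : Set (Y → A)} : IsIdemClosed ops (idemSpan ops G) := by
  intro k t ht x hx
  choose m ts hts c hc hx using hx
  refine ⟨_, t.sigmaComp ts, ht.sigmaComp hts, (fun q => c q.1 q.2) ∘ finSigmaFinEquiv.symm,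
    fun r => hc (finSigmaFinEquiv.symm r).1 _, ?_⟩
  funext y
  change _ = (t.sigmaComp ts).eval ops ((fun q => c q.1 q.2 y) ∘ finSigmaFinEquiv.symm)
  rw [eval_sigmaComp]
  simp only [hx]

theorem IsSubuniverseI.eval_mem_of_mem_idemSpan {S : Set A} (hS : IsSubuniverseI ops S)
    {G : Set (Y → A)} {y : Y} (hG : ∀ g ∈ G, g y ∈ S) {r : Y → A} (hr : r ∈ idemSpan ops G) :
    r y ∈ S :=
  idemSpan_subset (R := {r | r y ∈ S}) (fun k t ht _ hx => hS k t ht _ fun i => hx i) hG hr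

theorem IsIdemClosed.isSubuniverseI_image_eval {R : Set (Y → A)} (hR : IsIdemClosed ops R)
    (y : Y) : IsSubuniverseI ops {x | ∃ r ∈ R, r y = x} := by
  intro k t ht x hx
  choose r hr hrx using hx
  exact ⟨_, hR k t ht r hr, by simp only [hrx]⟩

theorem IsIdemClosed.isSubuniverseI_fiber {R : Set (Y → A)} (hR : IsIdemClosed ops R)
    (y₀ : Y) (c : A) (y : Y) : IsSubuniverseI ops {x | ∃ r ∈ R, r y₀ = c ∧ r y = x} := by
  intro k t ht x hx
  choose r hr hrc hrx using hx
  exact ⟨_, hR k t ht r hr, by simp only [hrc, ht c], by simp only [hrx]⟩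

theorem exists_binary_term_of_mem_idemSpan_pair {u v r : Y → A}
    (hr : r ∈ idemSpan ops {u, v}) :
    ∃ f : AlgTerm ι arity 2, IsIdemTerm ops f ∧ ∀ y, f.eval ops ![u y, v y] = r y := by
  classical
  obtain ⟨k, t, ht, c, hc, rfl⟩ := hr
  refine ⟨t.subst fun i => if c i = u then var 0 else var 1,
    ht.subst fun i => by split <;> exact isIdemTerm_var _, fun y => ?_⟩
  rw [eval_subst]
  congr 1
  funext i
  by_cases hu : c i = u
  · simp [hu, eval]
  · have hv : c i = v := (hc i).resolve_left hu
    rw [if_neg hu, hv]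
    rfl

end IdemSpan

theorem exists_absorbing_binary_term {ops : ∀ i, (Fin (arity i) → A) → A} {B : Set A}
    (hBsub : IsSubuniverseI ops B)
    (hBmin : ∀ S : Set A, S ⊆ B → S ≠ B → S.Nonempty → IsSubuniverseI ops S →
      HasCubeTermOnI ops S)
    {a b : A} (haB : a ∈ B) (hbB : b ∈ B) (hab : ¬ PrecI ops a b) (hba : b ≠ a)
    {k : ℕ} {w : AlgTerm ι arity k} (hw : IsWNU ops w) :
    ∃ f : AlgTerm ι arity 2, IsIdemTerm ops f ∧
      f.eval ops ![a, b] = b ∧ f.eval ops ![b, a] = b := by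
  have i₀ : Fin k := ⟨0, by have := hw.1; omega⟩
  set s := w.eval ops (Function.update (fun _ => a) i₀ b)
  set e := w.eval ops (Function.update (fun _ => b) i₀ a)
  have hsB : s ∈ B := hBsub k w hw.2.1 _ fun i => by
    rw [Function.update_apply]; split <;> assumption
  set R' := idemSpan ops {![a, b], ![s, e]}
  set R := idemSpan ops {![a, b], ![b, a]}
  have hseR : ![s, e] ∈ R := by
    refine ⟨k, w, hw.2.1, Function.update (fun _ => ![a, b]) i₀ ![b, a], fun i => ?_, ?_⟩
    · rw [Function.update_apply]
      split <;> simp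
    · funext y
      simp only [Function.apply_update (fun _ (g : Fin 2 → A) => g y)]
      fin_cases y <;> rfl
  -- `b` lies in the subuniverse generated by `a` and the robust element `s`
  obtain ⟨r, hrR', hr0⟩ : b ∈ {x | ∃ r ∈ R', r 0 = x} :=
    mem_of_isRobust hBmin hbB hab hba (isIdemClosed_idemSpan.isSubuniverseI_image_eval 0)
      (fun _ ⟨_, hr, hrx⟩ => hrx ▸ hBsub.eval_mem_of_mem_idemSpan (by simp [haB, hsB]) hr)
      ⟨_, subset_idemSpan (Set.mem_insert _ _), rfl⟩
      ⟨_, subset_idemSpan (Set.mem_insert_of_mem _ rfl), rfl⟩ (hw.isRobust_update_a i₀)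
  have hr1 : IsRobust ops a b (r 1) :=
    (isSubuniverseI_setOf_isRobust ops a b).eval_mem_of_mem_idemSpan
      (by simpa [isRobust_self] using hw.isRobust_update_b (a := a) (b := b) i₀) hrR'
  have hR'R : R' ⊆ R := idemSpan_subset isIdemClosed_idemSpan <|
    Set.insert_subset_iff.2 ⟨subset_idemSpan (Set.mem_insert _ _), Set.singleton_subset_iff.2 hseR⟩
  obtain ⟨r', hr'R, hr'0, hr'1⟩ : b ∈ {x | ∃ r ∈ R, r 0 = b ∧ r 1 = x} :=
    mem_of_isRobust hBmin hbB hab hba (isIdemClosed_idemSpan.isSubuniverseI_fiber 0 b 1)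
      (fun _ ⟨_, hr, _, hrx⟩ => hrx ▸ hBsub.eval_mem_of_mem_idemSpan (by simp [haB, hbB]) hr)
      ⟨_, subset_idemSpan (Set.mem_insert_of_mem _ rfl), rfl, rfl⟩
      ⟨r, hR'R hrR', hr0, rfl⟩ hr1
  obtain ⟨f, hf, hfr⟩ := exists_binary_term_of_mem_idemSpan_pair hr'R
  exact ⟨f, hf, (hfr 0).trans hr'0, (hfr 1).trans hr'1⟩

section Congruence

variable {ops : ∀ i, (Fin (arity i) → A) → A} {S : Set A}

theorem Closure.eval {k : ℕ} (t : AlgTerm ι arity k) {x : Fin k → A}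
    (hx : ∀ i, Closure ops S (x i)) : Closure ops S (t.eval ops x) := by
  induction t with
  | var i => exact hx i
  | app i ts ih => exact Closure.app i _ ih

theorem IsCongOn.eval {θ : A → A → Prop} (hθ : IsCongOn ops (Closure ops S) θ) {k : ℕ}
    (t : AlgTerm ι arity k) {x y : Fin k → A} (hx : ∀ i, Closure ops S (x i))
    (hy : ∀ i, Closure ops S (y i)) (hxy : ∀ i, θ (x i) (y i)) :
    θ (t.eval ops x) (t.eval ops y) := by
  induction t with
  | var i => exact hxy i
  | app i ts ih => exact hθ.2.2.2 i _ _ (fun m => .eval _ hx) (fun m => .eval _ hy) ih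

theorem Closure.eval_vecCons (f : AlgTerm ι arity 2) {x y : A} (hx : Closure ops S x)
    (hy : Closure ops S y) : Closure ops S (f.eval ops ![x, y]) :=
  .eval f (Fin.forall_fin_two.2 ⟨hx, hy⟩)

theorem IsCongOn.eval_vecCons {θ : A → A → Prop} (hθ : IsCongOn ops (Closure ops S) θ)
    (f : AlgTerm ι arity 2) {x y x' y' : A} (hx : Closure ops S x) (hy : Closure ops S y)
    (hx' : Closure ops S x') (hy' : Closure ops S y') (hxx' : θ x x') (hyy' : θ y y') :
    θ (f.eval ops ![x, y]) (f.eval ops ![x', y']) :=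
  hθ.eval f (Fin.forall_fin_two.2 ⟨hx, hy⟩) (Fin.forall_fin_two.2 ⟨hx', hy'⟩)
    (Fin.forall_fin_two.2 ⟨hxx', hyy'⟩)

end Congruence

section Joins

variable {ops : ∀ i, (Fin (arity i) → A) → A} {S : Set A} {θ : A → A → Prop}
  {f : AlgTerm ι arity 2} {κ : Type} [DecidableEq κ] {α : Finset κ → A}

theorem closure_of_eval_eq_union (hf : ∀ I J, f.eval ops ![α I, α J] = α (I ∪ J))
    {I : Finset κ} (hI : I.Nonempty) (h1 : ∀ i ∈ I, Closure ops S (α {i})) :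
    Closure ops S (α I) := by
  induction hI using Finset.Nonempty.cons_induction with
  | singleton i => exact h1 i (Finset.mem_singleton_self i)
  | cons i I hiI hI ih =>
    rw [Finset.cons_eq_insert, Finset.insert_eq, ← hf]
    exact .eval_vecCons f (h1 i (by simp)) (ih fun j hj => h1 j (by simp [hj]))

theorem cong_union_of_forall_exists (hθ : IsCongOn ops (Closure ops S) θ)
    (hf : ∀ I J, f.eval ops ![α I, α J] = α (I ∪ J)) {I J : Finset κ} (hJ : J.Nonempty)
    (h1 : ∀ i ∈ I ∪ J, Closure ops S (α {i})) (hIJ : ∀ i ∈ I, ∃ j ∈ J, θ (α {i}) (α {j})) :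
    θ (α (I ∪ J)) (α J) := by
  induction I using Finset.induction_on with
  | empty => simpa using hθ.1 _ (closure_of_eval_eq_union hf hJ fun j hj => h1 j (by simp [hj]))
  | insert i I hiI ih =>
    have hC : ∀ K ⊆ insert i I ∪ J, K.Nonempty → Closure ops S (α K) := fun K hK hKne =>
      closure_of_eval_eq_union hf hKne fun k hk => h1 k (hK hk)
    obtain ⟨j, hj, hij⟩ := hIJ i (Finset.mem_insert_self i I)
    have hsplit : α (insert i I ∪ J) = f.eval ops ![α {i}, α (I ∪ J)] := by
      rw [hf, Finset.insert_union, Finset.insert_eq]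
    have habsorb : α J = f.eval ops ![α {j}, α J] := by
      rw [hf, ← Finset.insert_eq, Finset.insert_eq_of_mem hj]
    have hIJsub : I ∪ J ⊆ insert i I ∪ J :=
      Finset.union_subset_union (Finset.subset_insert i I) le_rfl
    rw [hsplit, habsorb]
    exact hθ.eval_vecCons f (hC {i} (by simp) (by simp))
      (hC (I ∪ J) hIJsub (hJ.mono Finset.subset_union_right)) (hC {j} (by simp [hj]) (by simp))
      (hC J Finset.subset_union_right hJ) hij
      (ih (fun k hk => h1 k (hIJsub hk)) fun k hk => hIJ k (Finset.mem_insert_of_mem hk))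

theorem cong_of_forall_exists (hθ : IsCongOn ops (Closure ops S) θ)
    (hf : ∀ I J, f.eval ops ![α I, α J] = α (I ∪ J)) {I J : Finset κ} (hI : I.Nonempty)
    (hJ : J.Nonempty) (h1 : ∀ i ∈ I ∪ J, Closure ops S (α {i}))
    (hIJ : ∀ i ∈ I, ∃ j ∈ J, θ (α {i}) (α {j})) (hJI : ∀ j ∈ J, ∃ i ∈ I, θ (α {j}) (α {i})) :
    θ (α I) (α J) := by
  have hC : ∀ K, K.Nonempty → K ⊆ I ∪ J → Closure ops S (α K) := fun K hK hKIJ =>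
    closure_of_eval_eq_union hf hK fun i hi => h1 i (hKIJ hi)
  have hCI := hC I hI Finset.subset_union_left
  have hCIJ := hC _ (hI.mono Finset.subset_union_left) le_rfl
  have hIJ' : θ (α (I ∪ J)) (α J) := cong_union_of_forall_exists hθ hf hJ h1 hIJ
  have hJI' : θ (α (I ∪ J)) (α I) := by
    simpa only [Finset.union_comm] using
      cong_union_of_forall_exists hθ hf hI (by rwa [Finset.union_comm]) hJI
  exact hθ.2.2.1 _ hCI _ hCIJ _ (hC J hJ Finset.subset_union_right) (hθ.2.1 _ hCIJ _ hCI hJI') hIJ'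

theorem closure_and_cong_of_subset (hθ : IsCongOn ops (Closure ops S) θ)
    (hf : ∀ I J, f.eval ops ![α I, α J] = α (I ∪ J)) {p q r s : κ}
    (h1 : ∀ i ∈ ({p, q, r, s} : Finset κ), Closure ops S (α {i}))
    (hθpr : θ (α {p}) (α {r})) (hθqs : θ (α {q}) (α {s})) {K : Finset κ}
    (hK : K ⊆ {p, q, r, s}) (hKpr : p ∈ K ∨ r ∈ K) (hKqs : q ∈ K ∨ s ∈ K) :
    Closure ops S (α K) ∧ θ (α K) (α {p, q}) := by
  have h1' : ∀ i ∈ K ∪ {p, q}, Closure ops S (α {i}) := fun i hi =>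
    h1 i (Finset.union_subset hK (by intro; simp; tauto) hi)
  have hp := h1 p (by simp)
  have hq := h1 q (by simp)
  have hr := h1 r (by simp)
  have hs := h1 s (by simp)
  have hKne : K.Nonempty := hKpr.elim (⟨p, ·⟩) (⟨r, ·⟩)
  refine ⟨closure_of_eval_eq_union hf hKne fun i hi => h1' i (Finset.mem_union_left _ hi),
    cong_of_forall_exists hθ hf hKne (by simp) h1' (fun i hi => ?_) (fun j hj => ?_)⟩
  · have := hK hi
    simp only [Finset.mem_insert, Finset.mem_singleton] at this
    rcases this with rfl | rfl | rfl | rfl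
    · exact ⟨i, by simp, hθ.1 _ hp⟩
    · exact ⟨i, by simp, hθ.1 _ hq⟩
    · exact ⟨p, by simp, hθ.2.1 _ hp _ hr hθpr⟩
    · exact ⟨q, by simp, hθ.2.1 _ hq _ hs hθqs⟩
  · simp only [Finset.mem_insert, Finset.mem_singleton] at hj
    rcases hj with rfl | rfl
    · exact hKpr.elim (⟨j, ·, hθ.1 _ hp⟩) (⟨r, ·, hθpr⟩)
    · exact hKqs.elim (⟨j, ·, hθ.1 _ hq⟩) (⟨s, ·, hθqs⟩)

end Joins

section Power

variable {ops : ∀ i, (Fin (arity i) → A) → A}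

theorem eval_powOps {k : ℕ} (t : AlgTerm ι arity k) (X : Fin k → ℤ → A) (j : ℤ) :
    t.eval (powOps ops) X j = t.eval ops fun i => X i j := by
  induction t with
  | var i => rfl
  | app i ts ih => simp only [AlgTerm.eval, powOps, ih]

theorem eval_powOps_alphaFn {f : AlgTerm ι arity 2} (hf : IsIdemTerm ops f) {a b : A}
    (hfab : f.eval ops ![a, b] = b) (hfba : f.eval ops ![b, a] = b) (n : ℕ) (aIdx : ℤ → A)
    (I J : Finset ℤ) :
    f.eval (powOps ops) ![alphaFn n aIdx a b I, alphaFn n aIdx a b J] =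
      alphaFn n aIdx a b (I ∪ J) := by
  funext j
  rw [eval_powOps]
  have hpt (X Y : ℤ → A) : (fun i => ![X, Y] i j) = ![X j, Y j] := by
    funext i
    fin_cases i <;> rfl
  simp only [hpt, alphaFn, Finset.mem_union]
  split_ifs <;> simp_all [hf.eval_vecCons_self]

end Power

theorem exists_eq_alphaFn_of_mem_famSet {n : ℕ} {aIdx : ℤ → A} {a b : A} {p q r s : ℤ}
    {x : ℤ → A} (hx : x ∈ famSet n aIdx a b p q r s) :
    ∃ K : Finset ℤ, K ⊆ {p, q, r, s} ∧ (p ∈ K ∨ r ∈ K) ∧ (q ∈ K ∨ s ∈ K) ∧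
      x = alphaFn n aIdx a b K := by
  obtain ⟨m, hm, w, hw, rfl | ⟨k, hk, rfl⟩⟩ := hx
  all_goals
    simp only [Finset.mem_insert, Finset.mem_singleton] at hm hw
    refine ⟨_, ?_, ?_, ?_, rfl⟩ <;> simp [Finset.insert_subset_iff] at * <;> omega

theorem stmt_5_general
    {ι A : Type} {arity : ι → ℕ}
    (ops : ∀ i : ι, (Fin (arity i) → A) → A)
    -- the universe of `A` is enumerated as `{a_0, a_{-1}, …, a_{-n}}`
    (n : ℕ) (aIdx : ℤ → A)
    -- `B` is a subuniverse of the idempotent reduct `A_I`, without a cube term,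
    -- minimal for this property
    (B : Set A) (hBsub : IsSubuniverseI ops B)
    (hBmin : ∀ S : Set A, S ⊆ B → S ≠ B → S.Nonempty → IsSubuniverseI ops S →
      HasCubeTermOnI ops S)
    -- `(D, B)` is a cube term blocker for the algebra `B`
    (D : Set A) (hDB : D ⊆ B)
    -- `a ∈ B ∖ D` and `b ∈ D` with `a ⊀ b` relative to the idempotent terms of `A`
    (a b : A) (haB : a ∈ B) (haD : a ∉ D) (hbD : b ∈ D)
    (hab : ¬ PrecI ops a b)
    -- `A` has a weak near unanimity term
    (hWNU : ∃ (k : ℕ) (w : AlgTerm ι arity k), IsWNU ops w)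
    -- `θ` is a congruence of `C = Sg^{A^ℤ}(C_0)`
    (θ : (ℤ → A) → (ℤ → A) → Prop)
    (hθ : IsCongOn (powOps ops) (Closure (powOps ops) (C0set n aIdx a b)) θ)
    -- `p, q, r, s` are distinct indices in `ℤ ∖ [-n,0]`
    (p q r s : ℤ)
    (hp : p ∉ Finset.Icc (-(n : ℤ)) 0) (hq : q ∉ Finset.Icc (-(n : ℤ)) 0)
    (hr : r ∉ Finset.Icc (-(n : ℤ)) 0) (hs : s ∉ Finset.Icc (-(n : ℤ)) 0)
    (hθpr : θ (alphaFn n aIdx a b {p}) (alphaFn n aIdx a b {r}))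
    (hθqs : θ (alphaFn n aIdx a b {q}) (alphaFn n aIdx a b {s})) :
    (∀ x ∈ famSet n aIdx a b p q r s, Closure (powOps ops) (C0set n aIdx a b) x) ∧
    (∀ x ∈ famSet n aIdx a b p q r s, ∀ y ∈ famSet n aIdx a b p q r s, θ x y) := by
  obtain ⟨k, w, hw⟩ := hWNU
  obtain ⟨f, hf, hfab, hfba⟩ :=
    exists_absorbing_binary_term hBsub hBmin haB (hDB hbD) hab (fun h => haD (h ▸ hbD)) hw
  have h1 : ∀ i ∈ ({p, q, r, s} : Finset ℤ),
      Closure (powOps ops) (C0set n aIdx a b) (alphaFn n aIdx a b {i}) := by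
    simp only [Finset.mem_insert, Finset.mem_singleton]
    rintro i (rfl | rfl | rfl | rfl) <;> exact Closure.base ⟨_, ‹_›, rfl⟩
  have key : ∀ x ∈ famSet n aIdx a b p q r s, Closure (powOps ops) (C0set n aIdx a b) x ∧
      θ x (alphaFn n aIdx a b {p, q}) := by
    intro x hx
    obtain ⟨K, hK, hKpr, hKqs, rfl⟩ := exists_eq_alphaFn_of_mem_famSet hx
    exact closure_and_cong_of_subset hθ (eval_powOps_alphaFn hf hfab hfba n aIdx) h1 hθpr hθqs
      hK hKpr hKqs
  have hCpq := (key _ ⟨p, by simp, q, by simp, Or.inl rfl⟩).1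
  refine ⟨fun x hx => (key x hx).1, fun x hx y hy => ?_⟩
  exact hθ.2.2.1 _ (key x hx).1 _ hCpq _ (key y hy).1 (key x hx).2
    (hθ.2.1 _ (key y hy).1 _ hCpq (key y hy).2)

/-- In the standing setup, if `A` has a weak near unanimity term, `θ` is a
congruence of `C`, and `p, q, r, s` are distinct indices outside `[-n,0]` with `α_p θ α_r`
and `α_q θ α_s`, then the set `{α_{mn} : (m,n) ∈ {p,r} × {q,s}} ∪ {α_{mnk} : (m,n,k) ∈
{p,r} × {q,s} × {p,q,r,s}}` is contained in `C` and in a single `θ`-class. -/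
theorem stmt_5
    {ι A : Type} {arity : ι → ℕ} [Fintype A]
    (ops : ∀ i : ι, (Fin (arity i) → A) → A)
    -- the universe of `A` is enumerated as `{a_0, a_{-1}, …, a_{-n}}`
    (n : ℕ) (aIdx : ℤ → A)
    (hEnumSurj : ∀ x : A, ∃ j ∈ Finset.Icc (-(n : ℤ)) 0, aIdx j = x)
    (hEnumInj : ∀ j ∈ Finset.Icc (-(n : ℤ)) 0, ∀ j' ∈ Finset.Icc (-(n : ℤ)) 0,
      aIdx j = aIdx j' → j = j')
    -- `A` has no cube term
    (hNoCube : ¬ HasCubeTerm ops)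
    -- `B` is a subuniverse of the idempotent reduct `A_I`, without a cube term,
    -- minimal for this property
    (B : Set A) (hBsub : IsSubuniverseI ops B)
    (hBnoCube : ¬ HasCubeTermOnI ops B)
    (hBmin : ∀ S : Set A, S ⊆ B → S ≠ B → S.Nonempty → IsSubuniverseI ops S →
      HasCubeTermOnI ops S)
    -- `(D, B)` is a cube term blocker for the algebra `B`
    (D : Set A) (hDsub : IsSubuniverseI ops D) (hDne : D.Nonempty)
    (hDB : D ⊆ B) (hDproper : D ≠ B)
    (hBlock : ∀ k : ℕ, 0 < k → ∀ t : AlgTerm ι arity k, IsIdemTerm ops t →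
      ∃ i : Fin k, ∀ x : Fin k → A, (∀ j, x j ∈ B) → x i ∈ D → t.eval ops x ∈ D)
    -- `a ∈ B ∖ D` and `b ∈ D` with `a ⊀ b` relative to the idempotent terms of `A`
    (a b : A) (haB : a ∈ B) (haD : a ∉ D) (hbD : b ∈ D)
    (hab : ¬ PrecI ops a b)
    -- `A` has a weak near unanimity term
    (hWNU : ∃ (k : ℕ) (w : AlgTerm ι arity k), IsWNU ops w)
    -- `θ` is a congruence of `C = Sg^{A^ℤ}(C_0)`
    (θ : (ℤ → A) → (ℤ → A) → Prop)
    (hθ : IsCongOn (powOps ops) (Closure (powOps ops) (C0set n aIdx a b)) θ)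
    -- `p, q, r, s` are distinct indices in `ℤ ∖ [-n,0]`
    (p q r s : ℤ)
    (hp : p ∉ Finset.Icc (-(n : ℤ)) 0) (hq : q ∉ Finset.Icc (-(n : ℤ)) 0)
    (hr : r ∉ Finset.Icc (-(n : ℤ)) 0) (hs : s ∉ Finset.Icc (-(n : ℤ)) 0)
    (hpq : p ≠ q) (hpr : p ≠ r) (hps : p ≠ s)
    (hqr : q ≠ r) (hqs : q ≠ s) (hrs : r ≠ s)
    (hθpr : θ (alphaFn n aIdx a b {p}) (alphaFn n aIdx a b {r}))
    (hθqs : θ (alphaFn n aIdx a b {q}) (alphaFn n aIdx a b {s})) :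
    (∀ x ∈ famSet n aIdx a b p q r s, Closure (powOps ops) (C0set n aIdx a b) x) ∧
    (∀ x ∈ famSet n aIdx a b p q r s, ∀ y ∈ famSet n aIdx a b p q r s, θ x y) :=
  stmt_5_general ops n aIdx B hBsub hBmin D hDB a b haB haD hbD hab hWNU θ hθ p q r s hp hq hr hs
    hθpr hθqs
end

section
/- Assume the standing setup. Define α ∈ A^ℤ by α(j) = a_j for j ∈ [-n,0] and α(j) = a otherwise. Then α ∉ C; that is, there is no term t(x_1,…,x_m) of A and no indices i_1,…,i_m ∈ ℤ ∖ [-n,0] with t(α_{i_1},…,α_{i_m}) = α, where t is applied coordinatewise. -/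
variable {ι : Type} {arity : ι → ℕ} {A : Type}

namespace AlgTerm

def remap {k K : ℕ} (f : Fin k → Fin K) : AlgTerm ι arity k → AlgTerm ι arity K
  | .var j => .var (f j)
  | .app i ts => .app i fun m => (ts m).remap f

variable (ops : ∀ i, (Fin (arity i) → A) → A)

theorem eval_remap {k K : ℕ} (f : Fin k → Fin K) (t : AlgTerm ι arity k) (v : Fin K → A) :
    (t.remap f).eval ops v = t.eval ops (v ∘ f) := by
  induction t with
  | var j => rfl
  | app i ts ih => exact congrArg (ops i) (funext ih)

theorem eval_powOps {k : ℕ} (t : AlgTerm ι arity k) (x : Fin k → ℤ → A) (c : ℤ) :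
    t.eval (powOps ops) x c = t.eval ops fun i => x i c := by
  induction t with
  | var j => rfl
  | app i ts ih => exact congrArg (ops i) (funext ih)

theorem eval_powOps_nullary (t : AlgTerm ι arity 0) (x : Fin 0 → ℤ → A) (c c' : ℤ) :
    t.eval (powOps ops) x c = t.eval (powOps ops) x c' := by
  rw [eval_powOps, eval_powOps, Subsingleton.elim (fun i => x i c) fun i => x i c']

theorem isIdemTerm_of_eval_powOps {k : ℕ} {t : AlgTerm ι arity k} (x : Fin k → ℤ → A)
    (h : ∀ y : A, ∃ c : ℤ, (∀ i, x i c = y) ∧ t.eval (powOps ops) x c = y) :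
    IsIdemTerm ops t := by
  intro y
  obtain ⟨c, hxc, hc⟩ := h y
  rwa [eval_powOps, funext hxc] at hc

end AlgTerm

theorem Closure.exists_eval {ops : ∀ i, (Fin (arity i) → A) → A} {S : Set A} {x : A}
    (h : Closure ops S x) :
    ∃ (k : ℕ) (t : AlgTerm ι arity k) (v : Fin k → A), (∀ i, v i ∈ S) ∧ t.eval ops v = x := by
  induction h with
  | @base x hx => exact ⟨1, .var 0, fun _ => x, fun _ => hx, rfl⟩
  | app i x _ ih =>
    choose k t v hv hev using ih
    -- the variables of the `j`-th subterm are renamed apart into one block of `∑ j, k j` variables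
    have e : (Σ j : Fin (arity i), Fin (k j)) ≃ Fin (∑ j, k j) :=
      Fintype.equivFinOfCardEq (by simp)
    refine ⟨∑ j, k j, .app i fun j => (t j).remap fun s => e ⟨j, s⟩,
      fun l => v (e.symm l).1 (e.symm l).2, fun l => hv _ _, congrArg (ops i) (funext fun j => ?_)⟩
    rw [AlgTerm.eval_remap, ← hev j]
    exact congrArg (AlgTerm.eval ops (t j)) (funext fun s =>
      congrArg (fun p : Σ j, Fin (k j) => v p.1 p.2) (e.symm_apply_apply ⟨j, s⟩))

section Alpha

variable (ops : ∀ i, (Fin (arity i) → A) → A) {n : ℕ} {aIdx : ℤ → A} {a b : A}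

theorem alphaFn_of_mem {I : Finset ℤ} {j : ℤ} (hj : j ∈ Finset.Icc (-(n : ℤ)) 0) :
    alphaFn n aIdx a b I j = aIdx j :=
  if_pos hj

theorem alphaFn_of_notMem {I : Finset ℤ} {j : ℤ} (hj : j ∉ Finset.Icc (-(n : ℤ)) 0) :
    alphaFn n aIdx a b I j = if j ∈ I then b else a :=
  if_neg hj

/-- Column `j` of the witness of `a ≺ b` is coordinate `idx j` of the arguments `α_{idx i}`,
so its entry in row `i` is `b` exactly when `idx j = idx i`. -/
theorem precI_of_eval_alphaFn_eq
    (hsurj : ∀ x : A, ∃ j ∈ Finset.Icc (-(n : ℤ)) 0, aIdx j = x) (hne : a ≠ b)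
    {m : ℕ} (hm : 0 < m) (t : AlgTerm ι arity m) (idx : Fin m → ℤ)
    (hidx : ∀ i, idx i ∉ Finset.Icc (-(n : ℤ)) 0)
    (heq : t.eval (powOps ops) (fun i => alphaFn n aIdx a b {idx i}) = alphaFn n aIdx a b ∅) :
    PrecI ops a b := by
  have hidem : IsIdemTerm ops t := by
    refine AlgTerm.isIdemTerm_of_eval_powOps ops (fun i => alphaFn n aIdx a b {idx i}) fun y => ?_
    obtain ⟨c, hc, rfl⟩ := hsurj y
    exact ⟨c, fun i => alphaFn_of_mem hc, by rw [heq, alphaFn_of_mem hc]⟩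
  refine ⟨m, m, hm, hm, t, hidem, fun i j => if idx j = idx i then b else a,
    fun i j => (ite_eq_or_eq _ _ _).symm, fun i => ⟨i, by simp [hne.symm]⟩, fun j => ?_⟩
  have hj := congrFun heq (idx j)
  simpa [AlgTerm.eval_powOps, alphaFn_of_notMem (hidx j)] using hj

theorem not_exists_eval_alphaFn_eq_alphaFn_empty
    (hsurj : ∀ x : A, ∃ j ∈ Finset.Icc (-(n : ℤ)) 0, aIdx j = x) (hne : a ≠ b)
    (hab : ¬ PrecI ops a b) :
    ¬ ∃ (m : ℕ) (t : AlgTerm ι arity m) (idx : Fin m → ℤ),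
        (∀ i : Fin m, idx i ∉ Finset.Icc (-(n : ℤ)) 0) ∧
        t.eval (powOps ops) (fun i => alphaFn n aIdx a b {idx i}) = alphaFn n aIdx a b ∅ := by
  rintro ⟨m, t, idx, hidx, heq⟩
  rcases Nat.eq_zero_or_pos m with rfl | hm
  · -- a nullary term is constant, while `α` takes both values `a` and `b`
    obtain ⟨j, hj, hjb⟩ := hsurj b
    have h1 : (1 : ℤ) ∉ Finset.Icc (-(n : ℤ)) 0 := by simp
    have hconst := t.eval_powOps_nullary ops (fun i => alphaFn n aIdx a b {idx i}) 1 j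
    rw [heq, alphaFn_of_notMem h1, alphaFn_of_mem hj, hjb] at hconst
    exact hne (by simpa using hconst)
  · exact hab (precI_of_eval_alphaFn_eq ops hsurj hne hm t idx hidx heq)

end Alpha

theorem stmt_9_general
    {ι A : Type} {arity : ι → ℕ}
    (ops : ∀ i : ι, (Fin (arity i) → A) → A)
    -- the universe of `A` is enumerated as `{a_0, a_{-1}, …, a_{-n}}`
    (n : ℕ) (aIdx : ℤ → A)
    (hEnumSurj : ∀ x : A, ∃ j ∈ Finset.Icc (-(n : ℤ)) 0, aIdx j = x)
    (D : Set A)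
    -- `a ∈ B ∖ D` and `b ∈ D` with `a ⊀ b` relative to the idempotent terms of `A`
    (a b : A) (haD : a ∉ D) (hbD : b ∈ D)
    (hab : ¬ PrecI ops a b)
    :
    ¬ Closure (powOps ops) (C0set n aIdx a b) (alphaFn n aIdx a b ∅) ∧
    ¬ ∃ (m : ℕ) (t : AlgTerm ι arity m) (idx : Fin m → ℤ),
        (∀ i : Fin m, idx i ∉ Finset.Icc (-(n : ℤ)) 0) ∧
        t.eval (powOps ops) (fun i => alphaFn n aIdx a b {idx i}) = alphaFn n aIdx a b ∅ := by
  have hne : a ≠ b := fun h => haD (h ▸ hbD)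
  have hnot := not_exists_eval_alphaFn_eq_alphaFn_empty ops hEnumSurj hne hab
  refine ⟨fun hcl => hnot ?_, hnot⟩
  obtain ⟨m, t, v, hv, hev⟩ := hcl.exists_eval
  choose idx hidx hvi using hv
  exact ⟨m, t, idx, hidx, by rw [← hev, ← funext hvi]⟩

/-- In the standing setup, the element `α ∈ A^ℤ` with `α(j) = a_j` for
`j ∈ [-n,0]` and `α(j) = a` otherwise (i.e. `alphaFn n aIdx a b ∅`) is not in `C`; that is,
there is no term `t(x_1,…,x_m)` of `A` and indices `i_1,…,i_m ∈ ℤ ∖ [-n,0]` with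
`t(α_{i_1},…,α_{i_m}) = α` coordinatewise. -/
theorem stmt_9
    {ι A : Type} {arity : ι → ℕ} [Fintype A]
    (ops : ∀ i : ι, (Fin (arity i) → A) → A)
    -- the universe of `A` is enumerated as `{a_0, a_{-1}, …, a_{-n}}`
    (n : ℕ) (aIdx : ℤ → A)
    (hEnumSurj : ∀ x : A, ∃ j ∈ Finset.Icc (-(n : ℤ)) 0, aIdx j = x)
    (hEnumInj : ∀ j ∈ Finset.Icc (-(n : ℤ)) 0, ∀ j' ∈ Finset.Icc (-(n : ℤ)) 0,
      aIdx j = aIdx j' → j = j')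
    -- `A` has no cube term
    (hNoCube : ¬ HasCubeTerm ops)
    -- `B` is a subuniverse of the idempotent reduct `A_I`, without a cube term,
    -- minimal for this property
    (B : Set A) (hBsub : IsSubuniverseI ops B)
    (hBnoCube : ¬ HasCubeTermOnI ops B)
    (hBmin : ∀ S : Set A, S ⊆ B → S ≠ B → S.Nonempty → IsSubuniverseI ops S →
      HasCubeTermOnI ops S)
    -- `(D, B)` is a cube term blocker for the algebra `B`
    (D : Set A) (hDsub : IsSubuniverseI ops D) (hDne : D.Nonempty)
    (hDB : D ⊆ B) (hDproper : D ≠ B)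
    (hBlock : ∀ k : ℕ, 0 < k → ∀ t : AlgTerm ι arity k, IsIdemTerm ops t →
      ∃ i : Fin k, ∀ x : Fin k → A, (∀ j, x j ∈ B) → x i ∈ D → t.eval ops x ∈ D)
    -- `a ∈ B ∖ D` and `b ∈ D` with `a ⊀ b` relative to the idempotent terms of `A`
    (a b : A) (haB : a ∈ B) (haD : a ∉ D) (hbD : b ∈ D)
    (hab : ¬ PrecI ops a b)
    :
    ¬ Closure (powOps ops) (C0set n aIdx a b) (alphaFn n aIdx a b ∅) ∧
    ¬ ∃ (m : ℕ) (t : AlgTerm ι arity m) (idx : Fin m → ℤ),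
        (∀ i : Fin m, idx i ∉ Finset.Icc (-(n : ℤ)) 0) ∧
        t.eval (powOps ops) (fun i => alphaFn n aIdx a b {idx i}) = alphaFn n aIdx a b ∅ :=
  stmt_9_general ops n aIdx hEnumSurj D a b haD hbD hab
end
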